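/- Let G be a simple connected graph with diameter 2 and let x be a vertex of G. Let p be a pebble distribution on G of size m. Suppose that no vertex of {x} ∪ N(x) is reachable from any pebble distribution q with q(v) ≤ p(v) for all v and with size at most 5 (that is, {x} ∪ N(x) is not reachable using only five pebbles of p). Then G has at least ⌊(m² + 3)/2⌋ vertices. -/

import Mathlib

/-!
Let `S` be the set of pebbled vertices and `m = |S|`. Each configuration below could be moved
onto `{x} ∪ N(x)` with at most five pebbles of `p`, so none occurs: `p` is `0/1`-valued and
vanishes on `{x} ∪ N(x)`; two pebbled vertices have no common neighbour in `S ∪ {x} ∪ N(x)`; no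
vertex has four pebbled neighbours; the sets of exactly three pebbled neighbours ("triples", seen
from their "centres") meet pairwise in `0` or `2` vertices; and a neighbour of `x` adjacent to a
centre has no pebbled neighbour and is adjacent to centres of only one triple.

As the diameter is two, every pair of pebbled vertices is an edge (these edges form a matching),
is the set of pebbled neighbours of some vertex, or lies in one of the `t` triples, which cover
at most `2t + m/3` pairs. Vertices with two or three pebbled neighbours lie outside
`S ∪ {x} ∪ N(x)`, while `N(x)` contains `m + t` distinct vertices: a neighbour of each pebbled
vertex and a neighbour of a centre of each triple. Adding up gives `m² + 2 ≤ 2|V|`.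
-/

open Finset

variable {V : Type*}

/-- A pebbling move: remove two pebbles at a vertex `v` and add one pebble at an
adjacent vertex `u`. -/
def IsPebblingMove (G : SimpleGraph V) (p p' : V → ℕ) : Prop :=
  ∃ v u, G.Adj v u ∧ 2 ≤ p v ∧
    p' v = p v - 2 ∧ p' u = p u + 1 ∧ ∀ z, z ≠ v → z ≠ u → p' z = p z

/-- A strict rubbling move: remove one pebble each at distinct vertices `v` and `w`,
both adjacent to `u`, and add one pebble at `u`. -/
def IsStrictRubblingMove (G : SimpleGraph V) (p p' : V → ℕ) : Prop :=
  ∃ v w u, v ≠ w ∧ G.Adj v u ∧ G.Adj w u ∧ 1 ≤ p v ∧ 1 ≤ p w ∧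
    p' v = p v - 1 ∧ p' w = p w - 1 ∧ p' u = p u + 1 ∧
    ∀ z, z ≠ v → z ≠ w → z ≠ u → p' z = p z

/-- A rubbling move is a pebbling move or a strict rubbling move. -/
def IsRubblingMove (G : SimpleGraph V) (p p' : V → ℕ) : Prop :=
  IsPebblingMove G p p' ∨ IsStrictRubblingMove G p p'

/-- A vertex `x` is reachable from the pebble distribution `p` if some executable
sequence of rubbling moves leads to a distribution with a pebble on `x`. -/
def RubblingReachable (G : SimpleGraph V) (p : V → ℕ) (x : V) : Prop :=
  ∃ q : V → ℕ, Relation.ReflTransGen (IsRubblingMove G) p q ∧ 1 ≤ q x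

/-- The rubbling number: the least `m` such that every vertex is reachable from
every pebble distribution of size `m`. -/
noncomputable def rubblingNumber (G : SimpleGraph V) [Fintype V] : ℕ :=
  sInf {m | ∀ p : V → ℕ, ∑ v, p v = m → ∀ x, RubblingReachable G p x}

/-- The optimal rubbling number: the least size of a pebble distribution from which
every vertex is reachable. -/
noncomputable def optimalRubblingNumber (G : SimpleGraph V) [Fintype V] : ℕ :=
  sInf {m | ∃ p : V → ℕ, ∑ v, p v = m ∧ ∀ x, RubblingReachable G p x}

open Relation

namespace SimpleGraph

variable {G : SimpleGraph V}

theorem exists_adj_adj_of_ediam_le_two (h : G.ediam ≤ 2) {u v : V} (hne : u ≠ v)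
    (hadj : ¬ G.Adj u v) : ∃ w, G.Adj u w ∧ G.Adj w v := by
  obtain ⟨w, hw⟩ := Set.nonempty_iff_ne_empty.mpr fun h₀ =>
    (two_lt_edist_iff.mpr ⟨hne, hadj, h₀⟩).not_ge (edist_le_ediam.trans h)
  rw [mem_commonNeighbors] at hw
  exact ⟨w, hw.1, hw.2.symm⟩

theorem exists_adj_adj_of_not_eq_or_adj (h : G.ediam ≤ 2) {x v : V}
    (hv : ¬(v = x ∨ G.Adj x v)) : ∃ a, G.Adj x a ∧ G.Adj a v :=
  G.exists_adj_adj_of_ediam_le_two h (fun hxv => hv (.inl hxv.symm)) (fun hxv => hv (.inr hxv))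

end SimpleGraph

namespace Finset

variable {α : Type*} [DecidableEq α]

theorem mul_card_le_of_pairwiseDisjoint {P : Finset (Finset α)} {s : Finset α} {k : ℕ}
    (hP : ∀ e ∈ P, e ⊆ s ∧ #e = k) (hd : (P : Set (Finset α)).PairwiseDisjoint id) :
    k * #P ≤ #s :=
  calc k * #P = ∑ e ∈ P, #e := by
        rw [sum_congr rfl fun e he => (hP e he).2, sum_const, smul_eq_mul, mul_comm]
    _ = #(P.biUnion id) := (card_biUnion hd).symm
    _ ≤ #s := card_le_card (biUnion_subset.mpr fun e he => (hP e he).1)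

theorem exists_disjoint_of_card_eq_three {s t : Finset α} (hs : #s = 3) (ht : #t = 3)
    (hst : s ≠ t) : ∃ e ⊆ s, ∃ e' ⊆ t, #e = 2 ∧ #e' = 2 ∧ Disjoint e e' := by
  obtain ⟨a, has, hat⟩ := not_subset.mp fun h => hst (eq_of_subset_of_card_le h (by omega))
  obtain ⟨b, hb⟩ : (s.erase a).Nonempty := by rw [← card_pos, card_erase_of_mem has]; omega
  obtain ⟨e', he', he'2⟩ := exists_subset_card_eq (s := t.erase b) (n := 2)
    (by have := pred_card_le_card_erase (s := t) (a := b); omega)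
  refine ⟨{a, b}, insert_subset has (singleton_subset_iff.mpr (mem_of_mem_erase hb)), e',
    he'.trans (erase_subset _ _), card_pair (ne_of_mem_erase hb).symm, he'2, ?_⟩
  rw [disjoint_insert_left, disjoint_singleton_left]
  exact ⟨fun h => hat (mem_of_mem_erase (he' h)), fun h => ne_of_mem_erase (he' h) rfl⟩

/-- By induction on `T`: a triple sharing a pair with another one brings at most two new pairs,
any other triple is disjoint from the rest and brings three new points. -/
theorem three_mul_card_biUnion_powersetCard_two_le {T : Finset (Finset α)}
    (h3 : ∀ τ ∈ T, #τ = 3) (h1 : ∀ τ ∈ T, ∀ τ' ∈ T, τ ≠ τ' → #(τ ∩ τ') ≠ 1) :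
    3 * #(T.biUnion (powersetCard 2)) ≤ 6 * #T + #(T.biUnion id) := by
  induction T using Finset.induction_on with
  | empty => simp
  | insert τ T hτ ih =>
    have ih := ih (fun σ hσ => h3 σ (mem_insert_of_mem hσ))
      (fun σ hσ σ' hσ' => h1 σ (mem_insert_of_mem hσ) σ' (mem_insert_of_mem hσ'))
    have hτ3 := h3 τ (mem_insert_self τ T)
    have hpairs : #(powersetCard 2 τ) = 3 := by rw [card_powersetCard, hτ3]; rfl
    rw [biUnion_insert, biUnion_insert, id_eq, card_insert_of_notMem hτ]
    by_cases hshare : ∃ τ' ∈ T, 2 ≤ #(τ ∩ τ')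
    · obtain ⟨τ', hτ', h2⟩ := hshare
      obtain ⟨e, he, he2⟩ := exists_subset_card_eq h2
      have heT : e ∈ T.biUnion (powersetCard 2) :=
        mem_biUnion.mpr ⟨τ', hτ', mem_powersetCard.mpr ⟨he.trans inter_subset_right, he2⟩⟩
      have heτ : e ∈ powersetCard 2 τ := mem_powersetCard.mpr ⟨he.trans inter_subset_left, he2⟩
      have hnew := card_union_le ((powersetCard 2 τ).erase e) (T.biUnion (powersetCard 2))
      rw [erase_union_of_mem heT, card_erase_of_mem heτ, hpairs] at hnew
      have hpoints := card_le_card (subset_union_right (s₁ := τ) (s₂ := T.biUnion id))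
      omega
    · push Not at hshare
      have hdisj : Disjoint τ (T.biUnion id) := by
        refine (disjoint_biUnion_right _ _ _).mpr fun σ hσ => ?_
        rw [id_eq, disjoint_iff_inter_eq_empty, ← card_eq_zero]
        have := h1 τ (mem_insert_self τ T) σ (mem_insert_of_mem hσ)
          (ne_of_mem_of_not_mem hσ hτ).symm
        have := hshare σ hσ
        omega
      have hnew := card_union_le (powersetCard 2 τ) (T.biUnion (powersetCard 2))
      rw [card_union_of_disjoint hdisj, hτ3]
      omega

end Finset

section Rubbling

variable {G : SimpleGraph V} {p q q₁ q₂ : V → ℕ} {u v w y : V}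

theorem IsRubblingMove.add_right (h : IsRubblingMove G p q) (r : V → ℕ) :
    IsRubblingMove G (p + r) (q + r) := by
  rcases h with ⟨v, u, hvu, h2, hv, hu, hz⟩ |
    ⟨v, w, u, hvw, hv, hw, h1v, h1w, hv', hw', hu, hz⟩
  · refine Or.inl ⟨v, u, hvu, ?_, ?_, ?_, fun z h₁ h₂ => ?_⟩ <;> grind [Pi.add_apply]
  · refine Or.inr ⟨v, w, u, hvw, hv, hw, ?_, ?_, ?_, ?_, ?_, fun z h₁ h₂ h₃ => ?_⟩ <;>
      grind [Pi.add_apply]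

theorem reflTransGen_isRubblingMove_add_right (h : ReflTransGen (IsRubblingMove G) p q)
    (r : V → ℕ) : ReflTransGen (IsRubblingMove G) (p + r) (q + r) :=
  h.lift (· + r) fun _ _ hm => hm.add_right r

variable [DecidableEq V]

theorem rubblingReachable_iff :
    RubblingReachable G q y ↔
      ∃ r : V → ℕ, ReflTransGen (IsRubblingMove G) q (Pi.single y 1 + r) := by
  refine ⟨fun ⟨q', hq', hy⟩ => ⟨q' - Pi.single y 1, ?_⟩, fun ⟨r, hr⟩ => ⟨_, hr, by simp⟩⟩
  convert hq' using 1
  funext z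
  by_cases hz : z = y
  · subst hz; simp; omega
  · simp [hz]

theorem rubblingReachable_single (y : V) : RubblingReachable G (Pi.single y 1) y :=
  ⟨_, .refl, by simp⟩

theorem RubblingReachable.exists_add (h₁ : RubblingReachable G q₁ v)
    (h₂ : RubblingReachable G q₂ w) :
    ∃ r, ReflTransGen (IsRubblingMove G) (q₁ + q₂) (Pi.single v 1 + Pi.single w 1 + r) := by
  obtain ⟨r₁, h₁⟩ := rubblingReachable_iff.mp h₁
  obtain ⟨r₂, h₂⟩ := rubblingReachable_iff.mp h₂
  refine ⟨r₁ + r₂, ?_⟩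
  have h₂' := reflTransGen_isRubblingMove_add_right h₂ (Pi.single v 1 + r₁)
  rw [add_comm q₂] at h₂'
  convert (reflTransGen_isRubblingMove_add_right h₁ q₂).trans h₂' using 1
  abel

theorem RubblingReachable.pebble (h₁ : RubblingReachable G q₁ v)
    (h₂ : RubblingReachable G q₂ v) (hvu : G.Adj v u) : RubblingReachable G (q₁ + q₂) u := by
  obtain ⟨r, h⟩ := h₁.exists_add h₂
  refine rubblingReachable_iff.mpr ⟨r, h.tail (Or.inl ⟨v, u, hvu, ?_, ?_, ?_,
    fun z hzv hzu => by simp [hzv, hzu]⟩)⟩ <;> simp [hvu.ne, hvu.ne', add_comm]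

theorem RubblingReachable.rubble (h₁ : RubblingReachable G q₁ v)
    (h₂ : RubblingReachable G q₂ w) (hvw : v ≠ w) (hv : G.Adj v u) (hw : G.Adj w u) :
    RubblingReachable G (q₁ + q₂) u := by
  obtain ⟨r, h⟩ := h₁.exists_add h₂
  refine rubblingReachable_iff.mpr ⟨r, h.tail (Or.inr ⟨v, w, u, hvw, hv, hw, ?_, ?_, ?_, ?_, ?_,
    fun z hzv hzw hzu => by simp [hzv, hzw, hzu]⟩)⟩ <;>
    simp [hv.ne, hv.ne', hw.ne, hw.ne', hvw.symm, add_comm]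

end Rubbling

section PebbleSets

variable [DecidableEq V] {G : SimpleGraph V} {s t : Finset V} {u v : V}

def pebblesOn (t : Finset V) (v : V) : ℕ := if v ∈ t then 1 else 0

theorem pebblesOn_singleton (v : V) : pebblesOn {v} = Pi.single v 1 := by
  funext z
  by_cases h : z = v <;> simp [pebblesOn, h]

theorem pebblesOn_union (h : Disjoint s t) : pebblesOn (s ∪ t) = pebblesOn s + pebblesOn t := by
  funext z
  have : z ∈ s → z ∉ t := fun hz => disjoint_left.mp h hz
  simp only [pebblesOn, mem_union, Pi.add_apply]
  split_ifs <;> tauto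

theorem pebblesOn_insert (h : v ∉ t) : pebblesOn (insert v t) = Pi.single v 1 + pebblesOn t := by
  rw [insert_eq, pebblesOn_union (disjoint_singleton_left.mpr h), pebblesOn_singleton]

theorem sum_pebblesOn [Fintype V] (t : Finset V) : ∑ v, pebblesOn t v = #t := by
  simp [pebblesOn]

theorem rubblingReachable_pebblesOn_of_card_eq_two (ht : #t = 2) (hu : ∀ v ∈ t, G.Adj u v) :
    RubblingReachable G (pebblesOn t) u := by
  obtain ⟨a, b, hab, rfl⟩ := card_eq_two.mp ht
  rw [pebblesOn_insert (by simpa), pebblesOn_singleton]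
  exact (rubblingReachable_single a).rubble (rubblingReachable_single b) hab
    (hu a (by simp)).symm (hu b (by simp)).symm

end PebbleSets

section Pebbled

variable [Fintype V] {G : SimpleGraph V} {p : V → ℕ}

def pebbled (p : V → ℕ) : Finset V := {v | p v ≠ 0}

@[simp]
theorem mem_pebbled {v : V} : v ∈ pebbled p ↔ p v ≠ 0 := by simp [pebbled]

theorem sum_eq_card_pebbled (h : ∀ v, p v ≤ 1) : ∑ v, p v = #(pebbled p) := by
  rw [card_eq_sum_ones, pebbled, sum_filter]
  exact sum_congr rfl fun v _ => by have := h v; split_ifs <;> omega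

theorem pebblesOn_le [DecidableEq V] {t : Finset V} (ht : t ⊆ pebbled p) : pebblesOn t ≤ p :=
  fun v => by
    unfold pebblesOn
    split_ifs with hv
    · exact Nat.one_le_iff_ne_zero.mpr (mem_pebbled.mp (ht hv))
    · exact Nat.zero_le _

variable (G) [DecidableRel G.Adj]

def pebbledNeighbors (p : V → ℕ) (u : V) : Finset V := {v ∈ pebbled p | G.Adj u v}

def hubs (p : V → ℕ) (k : ℕ) : Finset V := {u | #(pebbledNeighbors G p u) = k}

def pebbledTriples [DecidableEq V] (p : V → ℕ) : Finset (Finset V) :=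
  (hubs G p 3).image (pebbledNeighbors G p)

def pebbledEdges [DecidableEq V] (p : V → ℕ) : Finset (Finset V) :=
  ((pebbled p).powersetCard 2).filter fun e => G.IsClique (e : Set V)

variable {G}

@[simp]
theorem mem_pebbledNeighbors {u v : V} : v ∈ pebbledNeighbors G p u ↔ p v ≠ 0 ∧ G.Adj u v := by
  simp [pebbledNeighbors]

@[simp]
theorem mem_hubs {u : V} {k : ℕ} : u ∈ hubs G p k ↔ #(pebbledNeighbors G p u) = k := by
  simp [hubs]

theorem pebbledNeighbors_subset (u : V) : pebbledNeighbors G p u ⊆ pebbled p := filter_subset _ _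

variable [DecidableEq V]

theorem mem_pebbledTriples {τ : Finset V} :
    τ ∈ pebbledTriples G p ↔ ∃ u, #(pebbledNeighbors G p u) = 3 ∧ pebbledNeighbors G p u = τ := by
  simp [pebbledTriples]

theorem mem_pebbledEdges {e : Finset V} :
    e ∈ pebbledEdges G p ↔ (e ⊆ pebbled p ∧ #e = 2) ∧ G.IsClique (e : Set V) := by
  simp [pebbledEdges]

theorem rubblingReachable_of_subset_pebbledNeighbors {e : Finset V} {u : V}
    (he : e ⊆ pebbledNeighbors G p u) (he2 : #e = 2) : RubblingReachable G (pebblesOn e) u :=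
  rubblingReachable_pebblesOn_of_card_eq_two he2 fun _ hv => (mem_pebbledNeighbors.mp (he hv)).2

end Pebbled

def FiveBlocked [Fintype V] (G : SimpleGraph V) (p : V → ℕ) (x : V) : Prop :=
  ∀ q : V → ℕ, q ≤ p → ∑ v, q v ≤ 5 → ∀ y, y = x ∨ G.Adj x y → ¬ RubblingReachable G q y

namespace FiveBlocked

variable [Fintype V] [DecidableEq V] {G : SimpleGraph V} {p : V → ℕ} {x : V}
  (hB : FiveBlocked G p x)
include hB

theorem not_reachable_pebblesOn {t : Finset V} {y : V} (ht : t ⊆ pebbled p) (hcard : #t ≤ 5)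
    (hy : y = x ∨ G.Adj x y) : ¬ RubblingReachable G (pebblesOn t) y :=
  hB _ (pebblesOn_le ht) (by rwa [sum_pebblesOn]) y hy

theorem eq_zero_of_eq_or_adj {y : V} (hy : y = x ∨ G.Adj x y) : p y = 0 := by
  by_contra h
  refine hB.not_reachable_pebblesOn (t := {y}) (by simpa) (by simp) hy ?_
  rw [pebblesOn_singleton]
  exact rubblingReachable_single y

theorem le_one (hdiam : G.ediam ≤ 2) (v : V) : p v ≤ 1 := by
  by_contra! h
  have hv : ¬(v = x ∨ G.Adj x v) := fun hv => by have := hB.eq_zero_of_eq_or_adj hv; omega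
  obtain ⟨a, hxa, hav⟩ := G.exists_adj_adj_of_not_eq_or_adj hdiam hv
  refine hB (Pi.single v 1 + Pi.single v 1) (fun z => ?_) (by simp [sum_add_distrib]) a
    (.inr hxa) ((rubblingReachable_single v).pebble (rubblingReachable_single v) hav.symm)
  by_cases hz : z = v
  · subst hz; simp; omega
  · simp [hz]

variable [DecidableRel G.Adj]

theorem not_eq_or_adj_of_two_le_card {a : V} (h : 2 ≤ #(pebbledNeighbors G p a)) :
    ¬(a = x ∨ G.Adj x a) := fun ha => by
  obtain ⟨e, he, he2⟩ := exists_subset_card_eq h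
  exact hB.not_reachable_pebblesOn (he.trans (pebbledNeighbors_subset a)) (by omega) ha
    (rubblingReachable_of_subset_pebbledNeighbors he he2)

theorem pebbledNeighbors_eq_of_adj {u u' a : V} (hu : #(pebbledNeighbors G p u) = 3)
    (hu' : #(pebbledNeighbors G p u') = 3) (hua : G.Adj u a) (hu'a : G.Adj u' a)
    (ha : a = x ∨ G.Adj x a) : pebbledNeighbors G p u = pebbledNeighbors G p u' := by
  by_contra hne
  obtain ⟨e, he, e', he', he2, he'2, hdisj⟩ := exists_disjoint_of_card_eq_three hu hu' hne
  have huu' : u ≠ u' := fun h => hne (h ▸ rfl)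
  refine hB.not_reachable_pebblesOn (t := e ∪ e')
    (union_subset (he.trans (pebbledNeighbors_subset u)) (he'.trans (pebbledNeighbors_subset u')))
    ((card_union_le _ _).trans (by omega)) ha ?_
  rw [pebblesOn_union hdisj]
  exact (rubblingReachable_of_subset_pebbledNeighbors he he2).rubble
    (rubblingReachable_of_subset_pebbledNeighbors he' he'2) huu' hua hu'a

variable (hdiam : G.ediam ≤ 2)
include hdiam

theorem eq_zero_of_two_le_card {w : V} (h : 2 ≤ #(pebbledNeighbors G p w)) : p w = 0 := by
  by_contra hw
  obtain ⟨a, hxa, haw⟩ :=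
    G.exists_adj_adj_of_not_eq_or_adj hdiam (hB.not_eq_or_adj_of_two_le_card h)
  obtain ⟨e, he, he2⟩ := exists_subset_card_eq h
  have hwe : w ∉ e := fun hw' => G.irrefl (mem_pebbledNeighbors.mp (he hw')).2
  refine hB.not_reachable_pebblesOn (t := insert w e)
    (insert_subset (mem_pebbled.mpr hw) (he.trans (pebbledNeighbors_subset w)))
    ((card_insert_le _ _).trans (by omega)) (.inr hxa) ?_
  rw [pebblesOn_insert hwe]
  exact (rubblingReachable_single w).pebble (rubblingReachable_of_subset_pebbledNeighbors he he2)
    haw.symm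

theorem card_pebbledNeighbors_le_three (u : V) : #(pebbledNeighbors G p u) ≤ 3 := by
  by_contra! h
  obtain ⟨a, hxa, hau⟩ := G.exists_adj_adj_of_not_eq_or_adj hdiam
    (hB.not_eq_or_adj_of_two_le_card (a := u) (by omega))
  obtain ⟨e, he, he2⟩ := exists_subset_card_eq (s := pebbledNeighbors G p u) (n := 2) (by omega)
  obtain ⟨e', he', he'2⟩ := exists_subset_card_eq (s := pebbledNeighbors G p u \ e) (n := 2)
    (by rw [card_sdiff_of_subset he]; omega)
  have hdisj : Disjoint e e' := disjoint_of_subset_right he' disjoint_sdiff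
  have he'u : e' ⊆ pebbledNeighbors G p u := he'.trans sdiff_subset
  refine hB.not_reachable_pebblesOn (t := e ∪ e')
    (union_subset (he.trans (pebbledNeighbors_subset u)) (he'u.trans (pebbledNeighbors_subset u)))
    ((card_union_le _ _).trans (by omega)) (.inr hxa) ?_
  rw [pebblesOn_union hdisj]
  exact (rubblingReachable_of_subset_pebbledNeighbors he he2).pebble
    (rubblingReachable_of_subset_pebbledNeighbors he'u he'2) hau.symm

theorem pebbledNeighbors_eq_empty_of_adj {u a : V} (hu : #(pebbledNeighbors G p u) = 3)
    (hua : G.Adj u a) (ha : a = x ∨ G.Adj x a) : pebbledNeighbors G p a = ∅ := by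
  by_contra hne
  obtain ⟨r, hr⟩ := nonempty_iff_ne_empty.mpr hne
  rw [mem_pebbledNeighbors] at hr
  have hur : u ≠ r := fun h => hr.1 (h ▸ hB.eq_zero_of_two_le_card hdiam (by omega))
  obtain ⟨e, he, he2⟩ := exists_subset_card_eq (s := (pebbledNeighbors G p u).erase r) (n := 2)
    (by have := pred_card_le_card_erase (s := pebbledNeighbors G p u) (a := r); omega)
  have hre : r ∉ e := fun h => ne_of_mem_erase (he h) rfl
  have heu : e ⊆ pebbledNeighbors G p u := he.trans (erase_subset _ _)
  refine hB.not_reachable_pebblesOn (t := insert r e)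
    (insert_subset (mem_pebbled.mpr hr.1) (heu.trans (pebbledNeighbors_subset u)))
    ((card_insert_le _ _).trans (by omega)) ha ?_
  rw [pebblesOn_insert hre, add_comm]
  exact (rubblingReachable_of_subset_pebbledNeighbors heu he2).rubble
    (rubblingReachable_single r) hur hua hr.2.symm

theorem card_inter_ne_one {u u' : V} (hu : #(pebbledNeighbors G p u) = 3)
    (hu' : #(pebbledNeighbors G p u') = 3) :
    #(pebbledNeighbors G p u ∩ pebbledNeighbors G p u') ≠ 1 := by
  intro h1
  obtain ⟨s, hs⟩ := card_eq_one.mp h1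
  obtain ⟨hsu, hsu'⟩ := mem_inter.mp (hs ▸ mem_singleton_self s)
  have huu' : u ≠ u' := by rintro rfl; rw [inter_self] at h1; omega
  set e := (pebbledNeighbors G p u).erase s
  set e' := (pebbledNeighbors G p u').erase s
  have he2 : #e = 2 := by rw [card_erase_of_mem hsu, hu]
  have he'2 : #e' = 2 := by rw [card_erase_of_mem hsu', hu']
  have hdisj : Disjoint e e' := disjoint_left.mpr fun z hz hz' => ne_of_mem_erase hz <|
    mem_singleton.mp (hs ▸ mem_inter.mpr ⟨mem_of_mem_erase hz, mem_of_mem_erase hz'⟩)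
  have hse : s ∉ e ∪ e' := by simp [e, e']
  obtain ⟨b, hxb, hbs⟩ := G.exists_adj_adj_of_not_eq_or_adj hdiam fun h =>
    (mem_pebbledNeighbors.mp hsu).1 (hB.eq_zero_of_eq_or_adj h)
  refine hB.not_reachable_pebblesOn (t := insert s (e ∪ e'))
    (insert_subset (pebbledNeighbors_subset u hsu) (union_subset
      ((erase_subset _ _).trans (pebbledNeighbors_subset u))
      ((erase_subset _ _).trans (pebbledNeighbors_subset u'))))
    ((card_insert_le _ _).trans (by have := card_union_le e e'; omega)) (.inr hxb) ?_
  rw [pebblesOn_insert hse, pebblesOn_union hdisj]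
  exact (rubblingReachable_single s).pebble
    ((rubblingReachable_of_subset_pebbledNeighbors (erase_subset _ _) he2).rubble
      (rubblingReachable_of_subset_pebbledNeighbors (erase_subset _ _) he'2) huu'
      (mem_pebbledNeighbors.mp hsu).2 (mem_pebbledNeighbors.mp hsu').2) hbs.symm

theorem eq_insert_pebbledNeighbors {e : Finset V} {v : V} (he : e ∈ pebbledEdges G p)
    (hv : v ∈ e) : e = insert v (pebbledNeighbors G p v) := by
  obtain ⟨⟨heS, he2⟩, hc⟩ := mem_pebbledEdges.mp he
  have hle : #(pebbledNeighbors G p v) ≤ 1 := by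
    by_contra! h
    exact mem_pebbled.mp (heS hv) (hB.eq_zero_of_two_le_card hdiam h)
  refine eq_of_subset_of_card_le (fun z hz => ?_) ((card_insert_le _ _).trans (by omega))
  rcases eq_or_ne z v with rfl | hzv
  · exact mem_insert_self _ _
  · exact mem_insert_of_mem
      (mem_pebbledNeighbors.mpr ⟨mem_pebbled.mp (heS hz), hc hv hz hzv.symm⟩)

theorem two_mul_card_pebbledEdges_le : 2 * #(pebbledEdges G p) ≤ #(pebbled p) :=
  mul_card_le_of_pairwiseDisjoint (fun _ he => (mem_pebbledEdges.mp he).1)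
    fun e he e' he' hne => disjoint_left.mpr fun v hv hv' => hne <| by
      rw [hB.eq_insert_pebbledNeighbors hdiam he hv, hB.eq_insert_pebbledNeighbors hdiam he' hv']

theorem powersetCard_two_pebbled_subset :
    (pebbled p).powersetCard 2 ⊆ pebbledEdges G p ∪ (hubs G p 2).image (pebbledNeighbors G p) ∪
      (pebbledTriples G p).biUnion (powersetCard 2) := by
  intro e he
  by_cases hc : G.IsClique (e : Set V)
  · exact mem_union_left _ (mem_union_left _ (mem_pebbledEdges.mpr ⟨mem_powersetCard.mp he, hc⟩))
  obtain ⟨heS, he2⟩ := mem_powersetCard.mp he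
  obtain ⟨s, t, hst, rfl⟩ := card_eq_two.mp he2
  rw [coe_pair, SimpleGraph.isClique_pair, Classical.not_imp] at hc
  obtain ⟨u, hsu, hut⟩ := G.exists_adj_adj_of_ediam_le_two hdiam hst hc.2
  have hsub : {s, t} ⊆ pebbledNeighbors G p u := by
    simp only [insert_subset_iff, singleton_subset_iff, mem_pebbled] at heS ⊢
    exact ⟨mem_pebbledNeighbors.mpr ⟨heS.1, hsu.symm⟩, mem_pebbledNeighbors.mpr ⟨heS.2, hut⟩⟩
  have h2 := he2 ▸ card_le_card hsub
  have h3 := hB.card_pebbledNeighbors_le_three hdiam u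
  by_cases hu2 : #(pebbledNeighbors G p u) = 2
  · exact mem_union_left _ (mem_union_right _ (mem_image.mpr
      ⟨u, mem_hubs.mpr hu2, (eq_of_subset_of_card_le hsub (by omega)).symm⟩))
  · exact mem_union_right _ (mem_biUnion.mpr ⟨pebbledNeighbors G p u,
      mem_pebbledTriples.mpr ⟨u, by omega, rfl⟩, mem_powersetCard.mpr ⟨hsub, he2⟩⟩)

theorem six_mul_choose_two_le :
    6 * (#(pebbled p)).choose 2 ≤
      5 * #(pebbled p) + 6 * #(hubs G p 2) + 12 * #(pebbledTriples G p) := by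
  have hT3 : ∀ τ ∈ pebbledTriples G p, #τ = 3 := fun τ hτ => by
    obtain ⟨u, hu, rfl⟩ := mem_pebbledTriples.mp hτ
    exact hu
  have hTinter : ∀ τ ∈ pebbledTriples G p, ∀ τ' ∈ pebbledTriples G p, τ ≠ τ' → #(τ ∩ τ') ≠ 1 :=
    fun τ hτ τ' hτ' _ => by
      obtain ⟨u, hu, rfl⟩ := mem_pebbledTriples.mp hτ
      obtain ⟨u', hu', rfl⟩ := mem_pebbledTriples.mp hτ'
      exact hB.card_inter_ne_one hdiam hu hu'
  have hTS : #((pebbledTriples G p).biUnion id) ≤ #(pebbled p) :=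
    card_le_card <| biUnion_subset.mpr fun τ hτ => by
      obtain ⟨u, -, rfl⟩ := mem_pebbledTriples.mp hτ
      exact pebbledNeighbors_subset u
  have hcover := (card_le_card (hB.powersetCard_two_pebbled_subset hdiam)).trans
    ((card_union_le _ _).trans (Nat.add_le_add_right (card_union_le _ _) _))
  rw [card_powersetCard] at hcover
  have hedges := hB.two_mul_card_pebbledEdges_le hdiam
  have hpairs := three_mul_card_biUnion_powersetCard_two_le hT3 hTinter
  have hhubs : #((hubs G p 2).image (pebbledNeighbors G p)) ≤ #(hubs G p 2) := card_image_le
  omega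

theorem card_pebbled_le_card_biUnion :
    #(pebbled p) ≤ #((pebbled p).biUnion fun s => ({a | G.Adj x a ∧ G.Adj a s} : Finset V)) := by
  refine card_le_card_biUnion (fun s hs t ht hst => disjoint_left.mpr fun a has hat => ?_)
    fun s hs => ?_
  · simp only [mem_filter, mem_univ, true_and] at has hat
    refine hB.not_eq_or_adj_of_two_le_card (one_lt_card.mpr ⟨s, ?_, t, ?_, hst⟩) (.inr has.1)
    · exact mem_pebbledNeighbors.mpr ⟨mem_pebbled.mp hs, has.2⟩
    · exact mem_pebbledNeighbors.mpr ⟨mem_pebbled.mp ht, hat.2⟩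
  · obtain ⟨a, hxa, has⟩ := G.exists_adj_adj_of_not_eq_or_adj hdiam fun h =>
      mem_pebbled.mp hs (hB.eq_zero_of_eq_or_adj h)
    exact ⟨a, by simp [hxa, has]⟩

theorem card_pebbledTriples_le_card_biUnion :
    #(pebbledTriples G p) ≤ #((pebbledTriples G p).biUnion fun τ =>
      ({a | G.Adj x a ∧ ∃ u, pebbledNeighbors G p u = τ ∧ G.Adj u a} : Finset V)) := by
  refine card_le_card_biUnion (fun τ hτ τ' hτ' hne => disjoint_left.mpr fun a ha ha' => ?_)
    fun τ hτ => ?_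
  · simp only [mem_filter, mem_univ, true_and] at ha ha'
    obtain ⟨hxa, u, rfl, hua⟩ := ha
    obtain ⟨-, u', rfl, hu'a⟩ := ha'
    obtain ⟨w, hw, hwu⟩ := mem_pebbledTriples.mp hτ
    obtain ⟨w', hw', hwu'⟩ := mem_pebbledTriples.mp hτ'
    exact hne (hB.pebbledNeighbors_eq_of_adj (hwu ▸ hw) (hwu' ▸ hw') hua hu'a (.inr hxa))
  · obtain ⟨u, hu, rfl⟩ := mem_pebbledTriples.mp hτ
    obtain ⟨a, hxa, hau⟩ := G.exists_adj_adj_of_not_eq_or_adj hdiam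
      (hB.not_eq_or_adj_of_two_le_card (a := u) (by omega))
    exact ⟨a, by simp only [mem_filter, mem_univ, true_and]; exact ⟨hxa, u, rfl, hau.symm⟩⟩

theorem card_pebbled_add_card_pebbledTriples_lt :
    #(pebbled p) + #(pebbledTriples G p) < #({v | v = x ∨ G.Adj x v} : Finset V) := by
  set A := (pebbled p).biUnion fun s => ({a | G.Adj x a ∧ G.Adj a s} : Finset V)
  set C := (pebbledTriples G p).biUnion fun τ =>
    ({a | G.Adj x a ∧ ∃ u, pebbledNeighbors G p u = τ ∧ G.Adj u a} : Finset V)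
  have hAC : Disjoint A C := disjoint_left.mpr fun a ha ha' => by
    simp only [A, C, mem_biUnion, mem_filter, mem_univ, true_and] at ha ha'
    obtain ⟨s, hs, -, has⟩ := ha
    obtain ⟨τ, hτ, hxa, u, rfl, hua⟩ := ha'
    obtain ⟨w, hw, hwu⟩ := mem_pebbledTriples.mp hτ
    have := hB.pebbledNeighbors_eq_empty_of_adj hdiam (hwu ▸ hw) hua (.inr hxa)
    exact eq_empty_iff_forall_notMem.mp this s (mem_pebbledNeighbors.mpr ⟨mem_pebbled.mp hs, has⟩)
  have hadj : ∀ a ∈ A ∪ C, G.Adj x a := fun a ha => by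
    simp only [A, C, mem_union, mem_biUnion, mem_filter, mem_univ, true_and] at ha
    rcases ha with ⟨_, _, h, _⟩ | ⟨_, _, h, _⟩ <;> exact h
  have hsub : insert x (A ∪ C) ⊆ ({v | v = x ∨ G.Adj x v} : Finset V) := fun v hv => by
    rcases mem_insert.mp hv with rfl | hv
    · simp
    · simp [hadj v hv]
  have hx : x ∉ A ∪ C := fun hx => G.irrefl (hadj x hx)
  calc #(pebbled p) + #(pebbledTriples G p) ≤ #A + #C :=
        Nat.add_le_add (hB.card_pebbled_le_card_biUnion hdiam)
          (hB.card_pebbledTriples_le_card_biUnion hdiam)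
    _ = #(A ∪ C) := (card_union_of_disjoint hAC).symm
    _ < #(insert x (A ∪ C)) := by rw [card_insert_of_notMem hx]; omega
    _ ≤ _ := card_le_card hsub

theorem card_pebbled_add_card_hubs_le :
    #(pebbled p) + #(hubs G p 2) + #(hubs G p 3) ≤
      #({v | ¬(v = x ∨ G.Adj x v)} : Finset V) := by
  have hhubs : ∀ k, 2 ≤ k → ∀ u ∈ hubs G p k, u ∉ pebbled p ∧ ¬(u = x ∨ G.Adj x u) :=
    fun k hk u hu => ⟨fun h => mem_pebbled.mp h
      (hB.eq_zero_of_two_le_card hdiam (mem_hubs.mp hu ▸ hk)),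
      hB.not_eq_or_adj_of_two_le_card (mem_hubs.mp hu ▸ hk)⟩
  have h23 : Disjoint (hubs G p 2) (hubs G p 3) :=
    disjoint_left.mpr fun u h2 h3 => by rw [mem_hubs] at h2 h3; omega
  have hS : Disjoint (pebbled p) (hubs G p 2 ∪ hubs G p 3) := disjoint_left.mpr fun s hs h => by
    rcases mem_union.mp h with h | h
    exacts [(hhubs 2 le_rfl s h).1 hs, (hhubs 3 (by norm_num) s h).1 hs]
  have hsub : pebbled p ∪ (hubs G p 2 ∪ hubs G p 3) ⊆
      ({v | ¬(v = x ∨ G.Adj x v)} : Finset V) := fun v hv => by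
    simp only [mem_filter, mem_univ, true_and]
    rcases mem_union.mp hv with h | h
    · exact fun hv => mem_pebbled.mp h (hB.eq_zero_of_eq_or_adj hv)
    · rcases mem_union.mp h with h | h
      exacts [(hhubs 2 le_rfl v h).2, (hhubs 3 (by norm_num) v h).2]
  rw [add_assoc, ← card_union_of_disjoint h23, ← card_union_of_disjoint hS]
  exact card_le_card hsub

theorem sq_add_two_le_two_mul_card : #(pebbled p) ^ 2 + 2 ≤ 2 * Fintype.card V := by
  have hnear := hB.card_pebbled_add_card_pebbledTriples_lt hdiam
  have hfar := hB.card_pebbled_add_card_hubs_le hdiam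
  have hpairs := hB.six_mul_choose_two_le hdiam
  have htriples : #(pebbledTriples G p) ≤ #(hubs G p 3) := card_image_le
  have hV := card_filter_add_card_filter_not (s := univ) (fun v => v = x ∨ G.Adj x v)
  rw [card_univ] at hV
  have hchoose : 2 * (#(pebbled p)).choose 2 + #(pebbled p) = #(pebbled p) ^ 2 := by
    rw [Nat.choose_two_right, Nat.mul_div_cancel' (Nat.even_mul_pred_self _).two_dvd]
    cases #(pebbled p) <;> simp [sq, Nat.mul_succ]
  omega

end FiveBlocked

theorem card_ge_of_not_reachable_five_general {V : Type*} [Fintype V] (G : SimpleGraph V)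
    (hdiam : G.diam = 2) (x : V) (p : V → ℕ) (m : ℕ)
    (hm : ∑ v, p v = m)
    (h : ∀ q : V → ℕ, (∀ v, q v ≤ p v) → ∑ v, q v ≤ 5 →
      ∀ y, y = x ∨ G.Adj x y → ¬ RubblingReachable G q y) :
    (m ^ 2 + 3) / 2 ≤ Fintype.card V := by
  classical
  have hB : FiveBlocked G p x := h
  have hdiam' : G.ediam ≤ 2 := ((ENat.toNat_eq_iff two_ne_zero).mp hdiam).le
  have := hB.sq_add_two_le_two_mul_card hdiam'
  rw [← hm, sum_eq_card_pebbled (hB.le_one hdiam')]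
  omega

/-- Let `G` be a connected graph of diameter 2 with goal vertex `x`, and let `p` be a
pebble distribution of size `m`.  If no vertex of `{x} ∪ N(x)` is reachable using only
five pebbles of `p`, then `G` has at least `⌊(m² + 3)/2⌋` vertices. -/
theorem card_ge_of_not_reachable_five {V : Type*} [Fintype V] (G : SimpleGraph V)
    (hconn : G.Connected) (hdiam : G.diam = 2) (x : V) (p : V → ℕ) (m : ℕ)
    (hm : ∑ v, p v = m)
    (h : ∀ q : V → ℕ, (∀ v, q v ≤ p v) → ∑ v, q v ≤ 5 →
      ∀ y, y = x ∨ G.Adj x y → ¬ RubblingReachable G q y) :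
    (m ^ 2 + 3) / 2 ≤ Fintype.card V :=
  card_ge_of_not_reachable_five_general G hdiam x p m hm h
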